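/- Let x_0 ≥ 0 and ℓ ≥ 1 be integers, κ > 0, t ≥ 0, and let e_1, e_2, … be independent random variables, each exponentially distributed with rate 1. Set c = max(x_0 + 1, ℓ), δ = (1 - e^{-cκt})^{1/ℓ}, and C = (1 - e^{-cκt})^{-1 - x_0/ℓ}. Then for every integer M ≥ ℓ + x_0, writing n = ⌊(M - x_0)/ℓ⌋ + 1, the probability that ∑_{i=1}^{n} e_i/(κ(1 + x_0 + (i-1)ℓ)) ≤ t is at most C·δ^M, where 0 ≤ δ < 1. -/

import Mathlib

/-!
Since `e i ≥ 0` and each rate `κ (1 + x₀ + (i - 1) ℓ)` is at most `c κ i`, the sum is at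
least `(c κ)⁻¹ ∑_{i=1}^n e i / i`. By Rényi's representation (proved by induction on `n`,
conditioning on the last summand) `∑_{i=1}^n e i / i` has the law of the maximum of `n`
independent rate-1 exponentials, so the probability is at most `q^n` with
`q = 1 - e^{-cκt} ∈ [0, 1)`. Finally `C δ^M = q^{(M - x₀)/ℓ - 1}` and `M ≤ x₀ + n ℓ`.
-/

open MeasureTheory ProbabilityTheory Real
open scoped ENNReal

section

variable {Ω : Type*} [MeasurableSpace Ω] {P : Measure Ω}

theorem ProbabilityTheory.IndepFun.measure_add_le_eq_lintegral [IsFiniteMeasure P]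
    {X Y : Ω → ℝ} (hX : Measurable X) (hY : Measurable Y) (hXY : IndepFun Y X P) (t : ℝ) :
    P {ω | Y ω + X ω ≤ t} = ∫⁻ x, P {ω | Y ω ≤ t - x} ∂P.map X := by
  have hset : MeasurableSet {p : ℝ × ℝ | p.2 + p.1 ≤ t} :=
    measurableSet_le (by fun_prop) measurable_const
  have hmap : P.map (fun ω => (X ω, Y ω)) = (P.map X).prod (P.map Y) :=
    (indepFun_iff_map_prod_eq_prod_map_map hX.aemeasurable hY.aemeasurable).mp hXY.symm
  calc P {ω | Y ω + X ω ≤ t}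
      = P.map (fun ω => (X ω, Y ω)) {p | p.2 + p.1 ≤ t} := by
        rw [Measure.map_apply (hX.prodMk hY) hset]; rfl
    _ = ∫⁻ x, P.map Y {y | y ≤ t - x} ∂P.map X := by
        rw [hmap, Measure.prod_apply hset]
        congr with x
        simp only [Set.preimage_ofPred_eq, le_sub_iff_add_le]
    _ = ∫⁻ x, P {ω | Y ω ≤ t - x} ∂P.map X := by
        congr with x
        exact Measure.map_apply hY measurableSet_Iic

theorem ae_nonneg_of_map_eq_expMeasure {X : Ω → ℝ} (hX : Measurable X) {r : ℝ}
    (hlaw : P.map X = expMeasure r) :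
    ∀ᵐ ω ∂P, 0 ≤ X ω := by
  have : ∀ᵐ x ∂expMeasure r, 0 ≤ x := by
    rw [ae_iff]
    simp only [not_le]
    change volume.withDensity (exponentialPDF r) (Set.Iio 0) = 0
    rw [withDensity_apply _ measurableSet_Iio]
    exact lintegral_exponentialPDF_of_nonpos le_rfl
  rw [← hlaw] at this
  exact ae_of_ae_map hX.aemeasurable this

end

theorem integral_exp_neg_mul_one_sub_exp_pow (n : ℕ) (s : ℝ) :
    ∫ u in (0 : ℝ)..(n + 1) * s, exp (-u) * (1 - exp (-(s - u / (n + 1)))) ^ n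
      = (1 - exp (-s)) ^ (n + 1) := by
  have hm : (n + 1 : ℝ) ≠ 0 := by positivity
  have hderiv : ∀ u : ℝ, HasDerivAt (fun u => -(exp (-u / (n + 1)) - exp (-s)) ^ (n + 1))
      (exp (-u) * (1 - exp (-(s - u / (n + 1)))) ^ n) u := by
    intro u
    have hy : HasDerivAt (fun u => exp (-u / (n + 1))) (exp (-u / (n + 1)) * (-1 / (n + 1))) u :=
      ((hasDerivAt_neg u).div_const _).exp
    refine (((hy.sub_const (exp (-s))).fun_pow (n + 1)).neg).congr_deriv ?_
    have hexp : exp (-u) = exp (-u / (n + 1)) ^ (n + 1) := by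
      rw [← exp_nat_mul]; push_cast; field_simp
    have hsplit : exp (-(s - u / (n + 1))) * exp (-u / (n + 1)) = exp (-s) := by
      rw [← exp_add]; ring_nf
    rw [hexp, ← hsplit, Nat.add_sub_cancel, ← one_sub_mul, mul_pow]
    push_cast
    field_simp
    ring
  have hupper : -((n + 1) * s) / (n + 1 : ℝ) = -s := by field_simp
  rw [intervalIntegral.integral_eq_sub_of_hasDerivAt (fun u _ => hderiv u)
    ((by fun_prop : Continuous _).intervalIntegrable _ _)]
  simp only [hupper, neg_zero, zero_div, exp_zero]
  ring

/-- The distribution function of the maximum of `n` independent rate-1 exponentials, which by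
Rényi's representation is also that of `∑_{i=1}^n e i / i`. -/
noncomputable def expMaxCDF (n : ℕ) (s : ℝ) : ℝ :=
  (Set.Ici 0).indicator (fun x => (1 - exp (-x)) ^ n) s

theorem measurable_expMaxCDF (n : ℕ) : Measurable (expMaxCDF n) :=
  (by fun_prop : Measurable fun x : ℝ => (1 - exp (-x)) ^ n).indicator measurableSet_Ici

theorem lintegral_expMeasure_expMaxCDF (n : ℕ) (s : ℝ) :
    ∫⁻ u, ENNReal.ofReal (expMaxCDF n (s - u / (n + 1))) ∂expMeasure 1
      = ENNReal.ofReal (expMaxCDF (n + 1) s) := by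
  set g : ℝ → ℝ := fun u => exp (-u) * (1 - exp (-(s - u / (n + 1)))) ^ n
  have hm : (0 : ℝ) < n + 1 := by positivity
  have hg : ∀ u, exponentialPDF 1 u * ENNReal.ofReal (expMaxCDF n (s - u / (n + 1)))
      = (Set.Icc 0 ((n + 1) * s)).indicator (fun u => ENNReal.ofReal (g u)) u := by
    intro u
    by_cases hu : 0 ≤ u
    · by_cases hus : u ≤ (n + 1) * s
      · have : 0 ≤ s - u / (n + 1) := by rw [sub_nonneg, div_le_iff₀' hm]; exact hus
        rw [Set.indicator_of_mem (Set.mem_Icc.mpr ⟨hu, hus⟩), exponentialPDF_of_nonneg hu,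
          expMaxCDF, Set.indicator_of_mem (Set.mem_Ici.mpr this),
          ← ENNReal.ofReal_mul (by positivity)]
        simp [g]
      · have : ¬ 0 ≤ s - u / (n + 1) := by rw [sub_nonneg, div_le_iff₀' hm]; exact hus
        rw [Set.indicator_of_notMem (fun h => hus h.2), expMaxCDF,
          Set.indicator_of_notMem (by simpa using this)]
        simp
    · rw [Set.indicator_of_notMem (fun h => hu h.1), exponentialPDF_of_neg (not_le.mp hu),
        zero_mul]
  calc ∫⁻ u, ENNReal.ofReal (expMaxCDF n (s - u / (n + 1))) ∂expMeasure 1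
      = ∫⁻ u, exponentialPDF 1 u * ENNReal.ofReal (expMaxCDF n (s - u / (n + 1))) :=
        lintegral_withDensity_eq_lintegral_mul _ (measurable_exponentialPDFReal 1).ennreal_ofReal
          ((measurable_expMaxCDF n).comp (by fun_prop)).ennreal_ofReal
    _ = ∫⁻ u in Set.Icc 0 ((n + 1) * s), ENNReal.ofReal (g u) := by
        simp_rw [hg]
        exact lintegral_indicator measurableSet_Icc _
    _ = ENNReal.ofReal (expMaxCDF (n + 1) s) := by
        rcases le_or_gt 0 s with hs | hs
        · have hg_nonneg : ∀ u ∈ Set.Icc 0 ((n + 1) * s), 0 ≤ g u := by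
            intro u hu
            have : u / (n + 1) ≤ s := by rw [div_le_iff₀' hm]; exact hu.2
            have : exp (-(s - u / (n + 1))) ≤ 1 := exp_le_one_iff.mpr (by linarith)
            exact mul_nonneg (exp_pos _).le (pow_nonneg (by linarith) n)
          rw [← ofReal_integral_eq_lintegral_ofReal
            ((by fun_prop : Continuous g).integrableOn_Icc)
            ((ae_restrict_iff' measurableSet_Icc).mpr (Filter.Eventually.of_forall hg_nonneg)),
            integral_Icc_eq_integral_Ioc, ← intervalIntegral.integral_of_le (by positivity),
            integral_exp_neg_mul_one_sub_exp_pow, expMaxCDF,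
            Set.indicator_of_mem (Set.mem_Ici.mpr hs)]
        · rw [Set.Icc_eq_empty (by nlinarith), Measure.restrict_empty, lintegral_zero_measure,
            expMaxCDF, Set.indicator_of_notMem (by simpa using hs), ENNReal.ofReal_zero]

section

variable {Ω : Type*} [MeasurableSpace Ω] {P : Measure Ω} [IsProbabilityMeasure P]
  {e : ℕ → Ω → ℝ} (he_meas : ∀ i, Measurable (e i)) (he_indep : iIndepFun e P)
  (he_law : ∀ i, P.map (e i) = expMeasure 1)
include he_meas he_indep he_law

theorem measure_sum_div_le_eq_expMaxCDF (n : ℕ) (s : ℝ) :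
    P {ω | ∑ i ∈ Finset.Icc 1 n, e i ω / i ≤ s} = ENNReal.ofReal (expMaxCDF n s) := by
  induction n generalizing s with
  | zero => by_cases hs : 0 ≤ s <;> simp [expMaxCDF, hs]
  | succ n ih =>
    set g : ℕ → Ω → ℝ := fun i ω => e i ω / i
    have hg_meas : ∀ i, Measurable (g i) := fun i => (he_meas i).div_const _
    set S : Ω → ℝ := fun ω => ∑ i ∈ Finset.Icc 1 n, g i ω
    have hindep : IndepFun S (g (n + 1)) P := by
      have h := (he_indep.comp (fun i x => x / (i : ℝ)) fun _ => measurable_id.div_const _)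
        |>.indepFun_finsetSum_of_notMem hg_meas (by simp : n + 1 ∉ Finset.Icc 1 n)
      rw [Finset.sum_fn] at h
      exact h
    have hdiv : Measurable fun u : ℝ => u / (n + 1) := measurable_id.div_const _
    have hlaw : P.map (g (n + 1)) = (expMeasure 1).map fun u : ℝ => u / (n + 1) := by
      rw [← he_law (n + 1), Measure.map_map hdiv (he_meas _)]
      simp [g, Function.comp_def]
    calc P {ω | ∑ i ∈ Finset.Icc 1 (n + 1), e i ω / i ≤ s}
        = P {ω | S ω + g (n + 1) ω ≤ s} := by
          simp [S, g, Finset.sum_Icc_succ_top]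
      _ = ∫⁻ x, P {ω | S ω ≤ s - x} ∂P.map (g (n + 1)) :=
          hindep.measure_add_le_eq_lintegral (hg_meas _)
            (Finset.measurable_sum _ fun i _ => hg_meas i) s
      _ = ∫⁻ x, ENNReal.ofReal (expMaxCDF n (s - x)) ∂P.map (g (n + 1)) := by
          simp only [S, g, ih]
      _ = ∫⁻ u, ENNReal.ofReal (expMaxCDF n (s - u / (n + 1))) ∂expMeasure 1 := by
          rw [hlaw]
          exact lintegral_map ((measurable_expMaxCDF n).comp (by fun_prop)).ennreal_ofReal hdiv
      _ = ENNReal.ofReal (expMaxCDF (n + 1) s) := lintegral_expMeasure_expMaxCDF n s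

theorem measure_sum_div_le_le_of_le_mul {a : ℝ} (ha : 0 < a)
    {lam : ℕ → ℝ} {n : ℕ} (hlam_pos : ∀ i ∈ Finset.Icc 1 n, 0 < lam i)
    (hlam_le : ∀ i ∈ Finset.Icc 1 n, lam i ≤ a * i) {t : ℝ} (ht : 0 ≤ t) :
    P {ω | ∑ i ∈ Finset.Icc 1 n, e i ω / lam i ≤ t}
      ≤ ENNReal.ofReal ((1 - exp (-(a * t))) ^ n) := by
  have he_nonneg : ∀ᵐ ω ∂P, ∀ i, 0 ≤ e i ω :=
    ae_all_iff.mpr fun i => ae_nonneg_of_map_eq_expMeasure (he_meas i) (he_law i)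
  have hterm : ∀ ω, (∀ i, 0 ≤ e i ω) → ∀ i ∈ Finset.Icc 1 n,
      e i ω / i ≤ a * (e i ω / lam i) := by
    intro ω hω i hi
    have hlam_div : lam i / a ≤ i := (div_le_iff₀' ha).mpr (hlam_le i hi)
    calc e i ω / i ≤ e i ω / (lam i / a) :=
          div_le_div_of_nonneg_left (hω i) (div_pos (hlam_pos i hi) ha) hlam_div
      _ = a * (e i ω / lam i) := by rw [div_div_eq_mul_div, mul_comm, mul_div_assoc]
  calc P {ω | ∑ i ∈ Finset.Icc 1 n, e i ω / lam i ≤ t}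
      ≤ P {ω | ∑ i ∈ Finset.Icc 1 n, e i ω / i ≤ a * t} := by
        refine measure_mono_ae ?_
        filter_upwards [he_nonneg] with ω hω hsum
        calc ∑ i ∈ Finset.Icc 1 n, e i ω / i
            ≤ ∑ i ∈ Finset.Icc 1 n, a * (e i ω / lam i) := Finset.sum_le_sum (hterm ω hω)
          _ = a * ∑ i ∈ Finset.Icc 1 n, e i ω / lam i := (Finset.mul_sum _ _ _).symm
          _ ≤ a * t := mul_le_mul_of_nonneg_left hsum ha.le
    _ = ENNReal.ofReal (expMaxCDF n (a * t)) :=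
        measure_sum_div_le_eq_expMaxCDF he_meas he_indep he_law n (a * t)
    _ = ENNReal.ofReal ((1 - exp (-(a * t))) ^ n) := by
        rw [expMaxCDF, Set.indicator_of_mem (Set.mem_Ici.mpr (by positivity))]

end

theorem pow_le_rpow_mul_rpow_pow {q : ℝ} (hq0 : 0 ≤ q) (hq1 : q ≤ 1) {x ℓ M n : ℕ}
    (hℓ : 0 < ℓ) (hn : n ≠ 0) (hM : M ≤ x + (n + 1) * ℓ) :
    q ^ n ≤ q ^ (-1 - (x : ℝ) / ℓ) * (q ^ ((1 : ℝ) / ℓ)) ^ M := by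
  rcases hq0.eq_or_lt with rfl | hq
  · rw [zero_pow hn]
    positivity
  have hℓ' : (0 : ℝ) < ℓ := by exact_mod_cast hℓ
  have hM' : ((M : ℝ) - x) / ℓ ≤ n + 1 := by
    rw [div_le_iff₀ hℓ']
    have : (M : ℝ) ≤ x + (n + 1) * ℓ := by exact_mod_cast hM
    linarith
  rw [← rpow_natCast (q ^ _), ← rpow_mul hq0, ← rpow_add hq, ← rpow_natCast q n]
  refine rpow_le_rpow_of_exponent_ge hq hq1 ?_
  calc -1 - (x : ℝ) / ℓ + 1 / ℓ * M = (M - x) / ℓ - 1 := by ring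
    _ ≤ n := by linarith

theorem one_add_add_sub_one_mul_pos (x ℓ : ℕ) {i : ℕ} (hi : 1 ≤ i) :
    0 < 1 + x + ((i : ℝ) - 1) * ℓ := by
  have hi' : (0 : ℝ) ≤ i - 1 := sub_nonneg.mpr (by exact_mod_cast hi)
  positivity

theorem one_add_add_sub_one_mul_le_max_mul (x ℓ : ℕ) {i : ℕ} (hi : 1 ≤ i) :
    1 + x + ((i : ℝ) - 1) * ℓ ≤ (max (x + 1) ℓ : ℕ) * i := by
  have hi' : (1 : ℝ) ≤ i := by exact_mod_cast hi
  have hx : (x : ℝ) + 1 ≤ (max (x + 1) ℓ : ℕ) := by exact_mod_cast le_max_left _ _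
  have hℓ : (ℓ : ℝ) ≤ (max (x + 1) ℓ : ℕ) := by exact_mod_cast le_max_right _ _
  nlinarith [mul_le_mul_of_nonneg_left hℓ (sub_nonneg.mpr hi')]

theorem stmt5_general {Ω : Type*} [MeasurableSpace Ω] (P : Measure Ω) [IsProbabilityMeasure P]
    (x₀ ℓ : ℕ) (hℓ : 1 ≤ ℓ) (κ t : ℝ) (hκ : 0 < κ) (ht : 0 ≤ t)
    (e : ℕ → Ω → ℝ) (he_meas : ∀ i, Measurable (e i))
    (he_indep : iIndepFun e P)
    (he_law : ∀ i, P.map (e i) = expMeasure 1)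
    (c : ℕ) (hc : c = max (x₀ + 1) ℓ)
    (δ C : ℝ)
    (hδ : δ = (1 - Real.exp (-(c : ℝ) * κ * t)) ^ ((1 : ℝ) / (ℓ : ℝ)))
    (hC : C = (1 - Real.exp (-(c : ℝ) * κ * t)) ^ (-1 - (x₀ : ℝ) / (ℓ : ℝ)))
    (M : ℕ) (n : ℕ) (hn : n = (M - x₀) / ℓ + 1) :
    0 ≤ δ ∧ δ < 1 ∧
      P {ω | ∑ i ∈ Finset.Icc 1 n, e i ω / (κ * (1 + x₀ + (i - 1) * ℓ)) ≤ t}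
        ≤ ENNReal.ofReal (C * δ ^ M) := by
  set q := 1 - exp (-(c : ℝ) * κ * t) with hq
  have hc_pos : (0 : ℝ) < c := Nat.cast_pos.mpr (by omega)
  have hq0 : 0 ≤ q := sub_nonneg.mpr (exp_le_one_iff.mpr (by
    rw [neg_mul, neg_mul, neg_nonpos]; positivity))
  have hq1 : q < 1 := sub_lt_self _ (exp_pos _)
  refine ⟨hδ ▸ rpow_nonneg hq0 _, hδ ▸ rpow_lt_one hq0 hq1 (by positivity), ?_⟩
  have hrate : ∀ i ∈ Finset.Icc 1 n, κ * (1 + x₀ + (i - 1) * ℓ : ℝ) ≤ c * κ * i := by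
    intro i hi
    have := hc ▸ one_add_add_sub_one_mul_le_max_mul x₀ ℓ (Finset.mem_Icc.mp hi).1
    nlinarith
  have hrate_pos : ∀ i ∈ Finset.Icc 1 n, 0 < κ * (1 + x₀ + (i - 1) * ℓ : ℝ) :=
    fun i hi => mul_pos hκ (one_add_add_sub_one_mul_pos x₀ ℓ (Finset.mem_Icc.mp hi).1)
  have hMn : M ≤ x₀ + (n + 1) * ℓ := by
    have := Nat.lt_div_mul_add (a := M - x₀) hℓ
    rw [hn, add_mul, add_mul]
    omega
  rw [neg_mul, neg_mul] at hq
  calc P {ω | ∑ i ∈ Finset.Icc 1 n, e i ω / (κ * (1 + x₀ + (i - 1) * ℓ)) ≤ t}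
      ≤ ENNReal.ofReal (q ^ n) :=
        hq ▸ measure_sum_div_le_le_of_le_mul he_meas he_indep he_law (by positivity)
          hrate_pos hrate ht
    _ ≤ ENNReal.ofReal (C * δ ^ M) := by
        rw [hC, hδ]
        exact ENNReal.ofReal_le_ofReal
          (pow_le_rpow_mul_rpow_pow hq0 hq1.le hℓ (hn ▸ Nat.succ_ne_zero _) hMn)

/-- For integers `x₀ ≥ 0`, `ℓ ≥ 1`, `κ > 0`, `t ≥ 0`, independent
rate-1 exponentials `e i`, with `c = max (x₀+1) ℓ`, `δ = (1-e^{-cκt})^{1/ℓ}` and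
`C = (1-e^{-cκt})^{-1-x₀/ℓ}`: for every `M ≥ ℓ + x₀`, with `n = ⌊(M-x₀)/ℓ⌋ + 1`,
`P(∑_{i=1}^n e i / (κ(1+x₀+(i-1)ℓ)) ≤ t) ≤ C δ^M`, and `0 ≤ δ < 1`. -/
theorem stmt5 {Ω : Type*} [MeasurableSpace Ω] (P : Measure Ω) [IsProbabilityMeasure P]
    (x₀ ℓ : ℕ) (hℓ : 1 ≤ ℓ) (κ t : ℝ) (hκ : 0 < κ) (ht : 0 ≤ t)
    (e : ℕ → Ω → ℝ) (he_meas : ∀ i, Measurable (e i))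
    (he_indep : iIndepFun e P)
    (he_law : ∀ i, P.map (e i) = expMeasure 1)
    (c : ℕ) (hc : c = max (x₀ + 1) ℓ)
    (δ C : ℝ)
    (hδ : δ = (1 - Real.exp (-(c : ℝ) * κ * t)) ^ ((1 : ℝ) / (ℓ : ℝ)))
    (hC : C = (1 - Real.exp (-(c : ℝ) * κ * t)) ^ (-1 - (x₀ : ℝ) / (ℓ : ℝ)))
    (M : ℕ) (hM : ℓ + x₀ ≤ M) (n : ℕ) (hn : n = (M - x₀) / ℓ + 1) :
    0 ≤ δ ∧ δ < 1 ∧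
      P {ω | ∑ i ∈ Finset.Icc 1 n, e i ω / (κ * (1 + x₀ + (i - 1) * ℓ)) ≤ t}
        ≤ ENNReal.ofReal (C * δ ^ M) :=
  stmt5_general P x₀ ℓ hℓ κ t hκ ht e he_meas he_indep he_law c hc δ C hδ hC M n hn
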